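/- arXiv:2511.02297 — 2 statements merged into one kernel-verified Lean document; each statement's English description precedes it below -/
import Mathlib

section
/- For every α ∈ (0,1)∪(1,∞), as β → 0⁺ the two-parameter Rényi conditional entropy converges to Cachin's Rényi conditional entropy: lim_{β→0⁺} H̃_{α,β}(X|Y) = Σ_{y: P_Y(y)>0} P_Y(y) · H_α(X)_{P_{X|y}}, where H_α(X)_{P_{X|y}} := (1/(1−α)) · log( Σ_x P_{X|Y}(x|y)^α ). -/
open scoped BigOperators

noncomputable section

variable {𝓧 𝓨 : Type*} [Fintype 𝓧] [Fintype 𝓨]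

/-- Marginal distribution of the second component. -/
def pY (P : 𝓧 × 𝓨 → ℝ) (y : 𝓨) : ℝ := ∑ x, P (x, y)

/-- Conditional distribution `P_{X|Y}(x|y)`. -/
def pCond (P : 𝓧 × 𝓨 → ℝ) (x : 𝓧) (y : 𝓨) : ℝ := P (x, y) / pY P y

/-- Two-parameter Rényi conditional entropy `H̃_{α,β}(X|Y)`. -/
def Htilde (P : 𝓧 × 𝓨 → ℝ) (α β : ℝ) : ℝ :=
  α / (β * (1 - α)) *
    Real.logb 2 (∑ y, if 0 < pY P y then
      pY P y * (∑ x, pCond P x y ^ α) ^ (β / α) else 0)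

/-! As `β → 0⁺`, `H̃_{α,β}` is `(1 - α)⁻¹ · log₂ M(t) / t` at `t = β / α`, where
`M(t) = Σ_y P_Y(y) · S_y ^ t` with `S_y = Σ_x P_{X|Y}(x|y) ^ α`. Since `M(0) = 1`,
`log M(t) / t` is a difference quotient of `log ∘ M` at `0`, so it tends to
`M'(0) = Σ_y P_Y(y) · log S_y`: the logarithm of a weighted power mean tends to that
of the weighted geometric mean. -/

open Filter Topology Finset

theorem tendsto_log_sum_mul_rpow_div {ι : Type*} (s : Finset ι) (w b : ι → ℝ)
    (hw : ∑ i ∈ s, w i = 1) (hb : ∀ i ∈ s, 0 < b i) :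
    Tendsto (fun t : ℝ => Real.log (∑ i ∈ s, w i * b i ^ t) / t) (𝓝[≠] 0)
      (𝓝 (∑ i ∈ s, w i * Real.log (b i))) := by
  have hM : HasDerivAt (fun t : ℝ => ∑ i ∈ s, w i * b i ^ t)
      (∑ i ∈ s, w i * Real.log (b i)) 0 := by
    refine HasDerivAt.fun_sum fun i hi => ?_
    simpa using (Real.hasStrictDerivAt_const_rpow (hb i hi) 0).hasDerivAt.const_mul (w i)
  have hlogM := hM.log (by simp [hw])
  simpa [slope_fun_def_field, hw] using hasDerivAt_iff_tendsto_slope.mp hlogM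

omit [Fintype 𝓨] in
theorem pY_nonneg {P : 𝓧 × 𝓨 → ℝ} (hP : ∀ p, 0 ≤ P p) (y : 𝓨) : 0 ≤ pY P y :=
  sum_nonneg fun x _ => hP (x, y)

theorem sum_pY (P : 𝓧 × 𝓨 → ℝ) : ∑ y, pY P y = ∑ p, P p := by
  rw [Fintype.sum_prod_type, sum_comm]
  rfl

theorem sum_filter_pos_pY {P : 𝓧 × 𝓨 → ℝ} (hP : ∀ p, 0 ≤ P p) (hPsum : ∑ p, P p = 1) :
    ∑ y ∈ univ.filter (0 < pY P ·), pY P y = 1 := by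
  rw [sum_filter_of_ne fun y _ h => (pY_nonneg hP y).lt_of_ne' h, sum_pY, hPsum]

omit [Fintype 𝓨] in
theorem sum_pCond_rpow_pos {P : 𝓧 × 𝓨 → ℝ} (hP : ∀ p, 0 ≤ P p) (α : ℝ) {y : 𝓨}
    (hy : 0 < pY P y) : 0 < ∑ x, pCond P x y ^ α := by
  obtain ⟨x, -, hx⟩ := exists_ne_zero_of_sum_ne_zero hy.ne'
  refine sum_pos' (fun x _ => Real.rpow_nonneg (div_nonneg (hP _) hy.le) α) ⟨x, mem_univ x, ?_⟩
  exact Real.rpow_pos_of_pos (div_pos ((hP _).lt_of_ne' hx) hy) α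

theorem Htilde_eq_mul_log_div (P : 𝓧 × 𝓨 → ℝ) (α β : ℝ) :
    Htilde P α β = (1 - α)⁻¹ / Real.log 2 *
      (Real.log (∑ y ∈ univ.filter (0 < pY P ·),
        pY P y * (∑ x, pCond P x y ^ α) ^ (β / α)) / (β / α)) := by
  rw [Htilde, Real.logb, sum_filter]
  simp only [div_eq_mul_inv, mul_inv, inv_inv]
  ring

theorem Htilde_tendsto_cachin_general
    (P : 𝓧 × 𝓨 → ℝ) (hP : ∀ p, 0 ≤ P p) (hPsum : ∑ p, P p = 1)
    (α : ℝ) (hα : 0 < α) :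
    Filter.Tendsto (fun β => Htilde P α β) (nhdsWithin 0 (Set.Ioi 0))
      (nhds (∑ y, if 0 < pY P y then
        pY P y * (1 / (1 - α) * Real.logb 2 (∑ x, pCond P x y ^ α)) else 0)) := by
  have hscale : Tendsto (· / α) (𝓝[>] 0) (𝓝[≠] 0) := by
    refine tendsto_nhdsWithin_iff.mpr ⟨?_, ?_⟩
    · simpa using ((continuous_id.div_const α).tendsto 0).mono_left nhdsWithin_le_nhds
    · filter_upwards [self_mem_nhdsWithin] with β hβ using div_ne_zero hβ.ne' hα.ne'
  have hlim := ((tendsto_log_sum_mul_rpow_div _ _ _ (sum_filter_pos_pY hP hPsum)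
    fun y hy => sum_pCond_rpow_pos hP α (mem_filter.mp hy).2).comp hscale).const_mul
      ((1 - α)⁻¹ / Real.log 2)
  convert hlim using 2
  · exact Htilde_eq_mul_log_div P α _
  · rw [← sum_filter, mul_sum]
    refine sum_congr rfl fun y _ => ?_
    rw [Real.logb]
    ring

/-- as `β → 0⁺`, `H̃_{α,β}(X|Y)` converges to Cachin's Rényi
conditional entropy `Σ_{y : P_Y(y) > 0} P_Y(y) · H_α(X)_{P_{X|y}}`. -/
theorem Htilde_tendsto_cachin
    [Nonempty 𝓧] [Nonempty 𝓨]
    (P : 𝓧 × 𝓨 → ℝ) (hP : ∀ p, 0 ≤ P p) (hPsum : ∑ p, P p = 1)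
    (α : ℝ) (hα : 0 < α) (hα1 : α ≠ 1) :
    Filter.Tendsto (fun β => Htilde P α β) (nhdsWithin 0 (Set.Ioi 0))
      (nhds (∑ y, if 0 < pY P y then
        pY P y * (1 / (1 - α) * Real.logb 2 (∑ x, pCond P x y ^ α)) else 0)) :=
  Htilde_tendsto_cachin_general P hP hPsum α hα
end
end

section
/- The two-parameter Rényi conditional entropy satisfies the data processing inequality under extra conditioning: let P_XYZ be a probability distribution on 𝒳×𝒴×𝒵. If either α, β ∈ (0,1] or α, β ∈ [1,∞), then H̃_{α,β}(X|YZ)_{P_XYZ} ≤ H̃_{α,β}(X|Y)_{P_XY}, where H̃_{α,β}(X|YZ) is computed treating (Y,Z) as the conditioning variable on 𝒴×𝒵, and P_XY is the marginal of P_XYZ on 𝒳×𝒴. -/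
open scoped BigOperators

noncomputable section

variable {𝓧 𝓨 : Type*} [Fintype 𝓧] [Fintype 𝓨]

/-- Shannon conditional entropy `H(X|Y)`. -/
def shannonCond (P : 𝓧 × 𝓨 → ℝ) : ℝ :=
  -∑ p, if 0 < P p then P p * Real.logb 2 (pCond P p.1 p.2) else 0

/-- Two-parameter Rényi conditional entropy, continuously extended at `α = 1`. -/
def HtildeE (P : 𝓧 × 𝓨 → ℝ) (α β : ℝ) : ℝ :=
  if α = 1 then shannonCond P else Htilde P α β

/-!
For `α ≠ 1` the entropy is a monotone function of `∑_y P_Y(y) ‖P_{X|Y=y}‖_α^β`, increasing for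
`α < 1` and decreasing for `α > 1`, and the summand for `y` is `m (N / m)^β` with `m = P_Y(y)` and
`N = ‖P_{XY}(·, y)‖_α`. Splitting the column `P_{XY}(·, y)` along `z`, it suffices that
`(m, N) ↦ m (N / m)^β` is superadditive for `β ≤ 1` and subadditive for `β ≥ 1` (Jensen for the
concave, resp. convex, `t ↦ t^β` with weights `m_z / m`), and that `N = ‖·‖_α` is superadditive
on nonnegative vectors for `α ≤ 1` and subadditive for `α ≥ 1`. The latter is the same perspective
inequality with exponent `α`, applied coordinatewise and summed over `x`.
At `α = 1` the claim is that conditioning reduces Shannon entropy, i.e. Gibbs' inequality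
`log t ≤ t - 1`.
-/

open Finset

section Perspective

variable {ι : Type*} (s : Finset ι) {m N : ι → ℝ} {β : ℝ}

theorem sum_div_sum_mul_div_eq (hmN : ∀ i ∈ s, m i = 0 → N i = 0) :
    ∑ i ∈ s, (m i / ∑ j ∈ s, m j) * (N i / m i) = (∑ i ∈ s, N i) / ∑ i ∈ s, m i := by
  rw [sum_div]
  refine sum_congr rfl fun i hi => ?_
  rw [mul_comm, ← mul_div_assoc, div_mul_cancel_of_imp (hmN i hi)]

theorem sum_mul_rpow_eq_zero_of_sum_eq_zero (hm : ∀ i ∈ s, 0 ≤ m i) (hM : ∑ i ∈ s, m i = 0) :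
    ∑ i ∈ s, m i * (N i / m i) ^ β = 0 :=
  sum_eq_zero fun i hi => by rw [(sum_eq_zero_iff_of_nonneg hm).1 hM i hi, zero_mul]

theorem sum_mul_div_rpow_le (hm : ∀ i ∈ s, 0 ≤ m i) (hN : ∀ i ∈ s, 0 ≤ N i)
    (hmN : ∀ i ∈ s, m i = 0 → N i = 0) (hβ0 : 0 ≤ β) (hβ1 : β ≤ 1) :
    ∑ i ∈ s, m i * (N i / m i) ^ β ≤
      (∑ i ∈ s, m i) * ((∑ i ∈ s, N i) / ∑ i ∈ s, m i) ^ β := by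
  rcases (sum_nonneg hm).eq_or_lt with hM | hM
  · rw [← hM, zero_mul, sum_mul_rpow_eq_zero_of_sum_eq_zero s hm hM.symm]
  have hjensen := (Real.concaveOn_rpow hβ0 hβ1).le_map_sum (t := s)
    (w := fun i => m i / ∑ j ∈ s, m j) (p := fun i => N i / m i)
    (fun i hi => div_nonneg (hm i hi) hM.le) (by rw [← sum_div, div_self hM.ne'])
    (fun i hi => div_nonneg (hN i hi) (hm i hi))
  simp only [smul_eq_mul, sum_div_sum_mul_div_eq s hmN] at hjensen
  calc ∑ i ∈ s, m i * (N i / m i) ^ β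
      = (∑ i ∈ s, m i) * ∑ i ∈ s, (m i / ∑ j ∈ s, m j) * (N i / m i) ^ β := by
        rw [mul_sum]; refine sum_congr rfl fun i _ => ?_; field_simp
    _ ≤ _ := mul_le_mul_of_nonneg_left hjensen hM.le

theorem mul_sum_div_rpow_le (hm : ∀ i ∈ s, 0 ≤ m i) (hN : ∀ i ∈ s, 0 ≤ N i)
    (hmN : ∀ i ∈ s, m i = 0 → N i = 0) (hβ : 1 ≤ β) :
    (∑ i ∈ s, m i) * ((∑ i ∈ s, N i) / ∑ i ∈ s, m i) ^ β ≤
      ∑ i ∈ s, m i * (N i / m i) ^ β := by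
  rcases (sum_nonneg hm).eq_or_lt with hM | hM
  · rw [← hM, zero_mul, sum_mul_rpow_eq_zero_of_sum_eq_zero s hm hM.symm]
  have hjensen := Real.rpow_arith_mean_le_arith_mean_rpow s
    (fun i => m i / ∑ j ∈ s, m j) (fun i => N i / m i)
    (fun i hi => div_nonneg (hm i hi) hM.le) (by rw [← sum_div, div_self hM.ne'])
    (fun i hi => div_nonneg (hN i hi) (hm i hi)) hβ
  rw [sum_div_sum_mul_div_eq s hmN] at hjensen
  calc (∑ i ∈ s, m i) * ((∑ i ∈ s, N i) / ∑ i ∈ s, m i) ^ β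
      ≤ (∑ i ∈ s, m i) * ∑ i ∈ s, (m i / ∑ j ∈ s, m j) * (N i / m i) ^ β :=
        mul_le_mul_of_nonneg_left hjensen hM.le
    _ = _ := by
        rw [mul_sum]; refine sum_congr rfl fun i _ => ?_; field_simp

end Perspective

theorem sum_apply_nonneg {ι κ : Type*} {s : Finset ι} {f : ι → κ → ℝ}
    (hf : ∀ i ∈ s, ∀ x, 0 ≤ f i x) (x : κ) : 0 ≤ (∑ i ∈ s, f i) x := by
  rw [Finset.sum_apply]; exact sum_nonneg fun i hi => hf i hi x

section RpowNorm

variable {α c : ℝ} {v : 𝓧 → ℝ}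

def rpowNorm (α : ℝ) (v : 𝓧 → ℝ) : ℝ := (∑ x, v x ^ α) ^ α⁻¹

theorem rpowNorm_nonneg (hv : ∀ x, 0 ≤ v x) : 0 ≤ rpowNorm α v :=
  Real.rpow_nonneg (sum_nonneg fun x _ => Real.rpow_nonneg (hv x) α) _

theorem rpowNorm_rpow (hv : ∀ x, 0 ≤ v x) (hα : α ≠ 0) : rpowNorm α v ^ α = ∑ x, v x ^ α :=
  Real.rpow_inv_rpow (sum_nonneg fun x _ => Real.rpow_nonneg (hv x) α) hα

theorem rpowNorm_eq_zero_iff (hv : ∀ x, 0 ≤ v x) (hα : α ≠ 0) : rpowNorm α v = 0 ↔ v = 0 := by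
  rw [rpowNorm,
    Real.rpow_eq_zero (sum_nonneg fun x _ => Real.rpow_nonneg (hv x) α) (inv_ne_zero hα),
    sum_eq_zero_iff_of_nonneg fun x _ => Real.rpow_nonneg (hv x) α, funext_iff]
  simp only [mem_univ, true_implies, Pi.zero_apply, Real.rpow_eq_zero (hv _) hα]

theorem apply_eq_zero_of_rpowNorm_eq_zero (hv : ∀ x, 0 ≤ v x) (hα : α ≠ 0)
    (h : rpowNorm α v = 0) (x : 𝓧) : v x = 0 := by
  rw [(rpowNorm_eq_zero_iff hv hα).1 h, Pi.zero_apply]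

theorem rpowNorm_pos (hv : ∀ x, 0 ≤ v x) (h : ∃ x, 0 < v x) : 0 < rpowNorm α v := by
  obtain ⟨x, hx⟩ := h
  refine Real.rpow_pos_of_pos (sum_pos' (fun x _ => Real.rpow_nonneg (hv x) α) ?_) _
  exact ⟨x, mem_univ x, Real.rpow_pos_of_pos hx α⟩

theorem sum_div_rpow_eq (hv : ∀ x, 0 ≤ v x) (hα : α ≠ 0) (hc : 0 ≤ c) :
    ∑ x, (v x / c) ^ α = (rpowNorm α v / c) ^ α := by
  simp only [Real.div_rpow (hv _) hc, Real.div_rpow (rpowNorm_nonneg hv) hc, rpowNorm_rpow hv hα,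
    sum_div]

variable {ι : Type*} (s : Finset ι) {f : ι → 𝓧 → ℝ}

theorem sum_sum_rpowNorm_mul_div_rpow (hf : ∀ i ∈ s, ∀ x, 0 ≤ f i x) (hα : α ≠ 0) :
    ∑ x, ∑ i ∈ s, rpowNorm α (f i) * (f i x / rpowNorm α (f i)) ^ α =
      ∑ i ∈ s, rpowNorm α (f i) := by
  rw [sum_comm]
  refine sum_congr rfl fun i hi => ?_
  rw [← mul_sum, sum_div_rpow_eq (hf i hi) hα (rpowNorm_nonneg (hf i hi))]
  rcases eq_or_ne (rpowNorm α (f i)) 0 with h0 | h0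
  · rw [h0, zero_mul]
  · rw [div_self h0, Real.one_rpow, mul_one]

theorem sum_mul_sum_div_rpow (hf : ∀ i ∈ s, ∀ x, 0 ≤ f i x) (hα : α ≠ 0) (hc : 0 ≤ c) :
    ∑ x, c * ((∑ i ∈ s, f i x) / c) ^ α = c * (rpowNorm α (∑ i ∈ s, f i) / c) ^ α := by
  rw [← mul_sum, ← sum_div_rpow_eq (sum_apply_nonneg hf) hα hc]
  simp only [Finset.sum_apply]

theorem sum_rpowNorm_le_rpowNorm_sum (hf : ∀ i ∈ s, ∀ x, 0 ≤ f i x) (hα0 : 0 < α)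
    (hα1 : α ≤ 1) : ∑ i ∈ s, rpowNorm α (f i) ≤ rpowNorm α (∑ i ∈ s, f i) := by
  set T := ∑ i ∈ s, rpowNorm α (f i)
  set G := rpowNorm α (∑ i ∈ s, f i)
  rcases (sum_nonneg fun i hi => rpowNorm_nonneg (hf i hi) : 0 ≤ T).eq_or_lt with hT | hT
  · exact hT.symm.le.trans (rpowNorm_nonneg (sum_apply_nonneg hf))
  have hjensen : T ≤ T * (G / T) ^ α :=
    calc T = ∑ x, ∑ i ∈ s, rpowNorm α (f i) * (f i x / rpowNorm α (f i)) ^ α :=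
          (sum_sum_rpowNorm_mul_div_rpow s hf hα0.ne').symm
      _ ≤ ∑ x, T * ((∑ i ∈ s, f i x) / T) ^ α := sum_le_sum fun x _ =>
          sum_mul_div_rpow_le s (fun i hi => rpowNorm_nonneg (hf i hi)) (fun i hi => hf i hi x)
            (fun i hi h0 => apply_eq_zero_of_rpowNorm_eq_zero (hf i hi) hα0.ne' h0 x) hα0.le hα1
      _ = T * (G / T) ^ α := sum_mul_sum_div_rpow s hf hα0.ne' hT.le
  have h1 : 1 ≤ (G / T) ^ α := (le_mul_iff_one_le_right hT).1 hjensen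
  have h2 : 1 ≤ G / T := by
    rw [← Real.rpow_rpow_inv (div_nonneg (rpowNorm_nonneg (sum_apply_nonneg hf)) hT.le) hα0.ne']
    exact Real.one_le_rpow h1 (inv_nonneg.2 hα0.le)
  exact (one_le_div hT).1 h2

theorem rpowNorm_sum_le_sum_rpowNorm (hf : ∀ i ∈ s, ∀ x, 0 ≤ f i x) (hα : 1 ≤ α) :
    rpowNorm α (∑ i ∈ s, f i) ≤ ∑ i ∈ s, rpowNorm α (f i) := by
  have hα0 : 0 < α := zero_lt_one.trans_le hα
  set T := ∑ i ∈ s, rpowNorm α (f i)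
  set G := rpowNorm α (∑ i ∈ s, f i)
  have hA0 : ∀ i ∈ s, rpowNorm α (f i) = 0 → ∀ x, f i x = 0 := fun i hi =>
    apply_eq_zero_of_rpowNorm_eq_zero (hf i hi) hα0.ne'
  rcases (sum_nonneg fun i hi => rpowNorm_nonneg (hf i hi) : 0 ≤ T).eq_or_lt with hT | hT
  · have hf0 : ∑ i ∈ s, f i = 0 := sum_eq_zero fun i hi => funext <|
      hA0 i hi ((sum_eq_zero_iff_of_nonneg fun i hi => rpowNorm_nonneg (hf i hi)).1 hT.symm i hi)
    exact ((rpowNorm_eq_zero_iff (sum_apply_nonneg hf) hα0.ne').2 hf0).le.trans hT.le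
  have hjensen : T * (G / T) ^ α ≤ T :=
    calc T * (G / T) ^ α = ∑ x, T * ((∑ i ∈ s, f i x) / T) ^ α :=
          (sum_mul_sum_div_rpow s hf hα0.ne' hT.le).symm
      _ ≤ ∑ x, ∑ i ∈ s, rpowNorm α (f i) * (f i x / rpowNorm α (f i)) ^ α :=
          sum_le_sum fun x _ => mul_sum_div_rpow_le s (fun i hi => rpowNorm_nonneg (hf i hi))
            (fun i hi => hf i hi x) (fun i hi h0 => hA0 i hi h0 x) hα
      _ = T := sum_sum_rpowNorm_mul_div_rpow s hf hα0.ne'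
  have h1 : (G / T) ^ α ≤ 1 := (mul_le_iff_le_one_right hT).1 hjensen
  have h2 : G / T ≤ 1 := by
    rw [← Real.rpow_rpow_inv (div_nonneg (rpowNorm_nonneg (sum_apply_nonneg hf)) hT.le) hα0.ne']
    exact Real.rpow_le_one (Real.rpow_nonneg (div_nonneg (rpowNorm_nonneg
      (sum_apply_nonneg hf)) hT.le) α) h1 (inv_nonneg.2 hα0.le)
  exact (div_le_one hT).1 h2

end RpowNorm

section Renyi

variable {α β : ℝ} {v : 𝓧 → ℝ}

-- `P_Y(y) ‖P_{X|Y=y}‖_α^β` for the column `v = P_{XY}(·, y)`; a column of mass `0` contributes `0`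
-- through the factor `∑ x, v x`, whatever the junk value of the division.
def renyiTerm (α β : ℝ) (v : 𝓧 → ℝ) : ℝ := (∑ x, v x) * (rpowNorm α v / ∑ x, v x) ^ β

theorem renyiTerm_nonneg (hv : ∀ x, 0 ≤ v x) : 0 ≤ renyiTerm α β v :=
  have hm : 0 ≤ ∑ x, v x := sum_nonneg fun x _ => hv x
  mul_nonneg hm (Real.rpow_nonneg (div_nonneg (rpowNorm_nonneg hv) hm) β)

theorem renyiTerm_pos (hv : ∀ x, 0 ≤ v x) (h : ∃ x, 0 < v x) : 0 < renyiTerm α β v := by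
  obtain ⟨x, hx⟩ := h
  have hm : 0 < ∑ x, v x := sum_pos' (fun x _ => hv x) ⟨x, mem_univ x, hx⟩
  exact mul_pos hm (Real.rpow_pos_of_pos (div_pos (rpowNorm_pos hv ⟨x, hx⟩) hm) β)

variable {ι : Type*} (s : Finset ι) {f : ι → 𝓧 → ℝ}

theorem sum_sum_apply_comm : ∑ x, (∑ i ∈ s, f i) x = ∑ i ∈ s, ∑ x, f i x := by
  simp only [Finset.sum_apply]; exact sum_comm

theorem rpowNorm_eq_zero_of_sum_eq_zero (hf : ∀ i ∈ s, ∀ x, 0 ≤ f i x) (hα : α ≠ 0) :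
    ∀ i ∈ s, ∑ x, f i x = 0 → rpowNorm α (f i) = 0 := fun i hi h0 =>
  (rpowNorm_eq_zero_iff (hf i hi) hα).2 <|
    funext fun x => (sum_eq_zero_iff_of_nonneg fun x _ => hf i hi x).1 h0 x (mem_univ x)

theorem sum_renyiTerm_le_renyiTerm_sum (hf : ∀ i ∈ s, ∀ x, 0 ≤ f i x) (hα0 : 0 < α)
    (hα1 : α ≤ 1) (hβ0 : 0 ≤ β) (hβ1 : β ≤ 1) :
    ∑ i ∈ s, renyiTerm α β (f i) ≤ renyiTerm α β (∑ i ∈ s, f i) :=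
  calc ∑ i ∈ s, renyiTerm α β (f i)
      ≤ (∑ i ∈ s, ∑ x, f i x) * ((∑ i ∈ s, rpowNorm α (f i)) / ∑ i ∈ s, ∑ x, f i x) ^ β :=
        sum_mul_div_rpow_le s (fun i hi => sum_nonneg fun x _ => hf i hi x)
          (fun i hi => rpowNorm_nonneg (hf i hi))
          (rpowNorm_eq_zero_of_sum_eq_zero s hf hα0.ne') hβ0 hβ1
    _ ≤ (∑ i ∈ s, ∑ x, f i x) * (rpowNorm α (∑ i ∈ s, f i) / ∑ i ∈ s, ∑ x, f i x) ^ β := by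
        have hm : 0 ≤ ∑ i ∈ s, ∑ x, f i x := sum_nonneg fun i hi => sum_nonneg fun x _ => hf i hi x
        gcongr
        · exact div_nonneg (sum_nonneg fun i hi => rpowNorm_nonneg (hf i hi)) hm
        · exact sum_rpowNorm_le_rpowNorm_sum s hf hα0 hα1
    _ = renyiTerm α β (∑ i ∈ s, f i) := by rw [renyiTerm, sum_sum_apply_comm]

theorem renyiTerm_sum_le_sum_renyiTerm (hf : ∀ i ∈ s, ∀ x, 0 ≤ f i x) (hα : 1 ≤ α)
    (hβ : 1 ≤ β) : renyiTerm α β (∑ i ∈ s, f i) ≤ ∑ i ∈ s, renyiTerm α β (f i) :=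
  have hα0 : 0 < α := zero_lt_one.trans_le hα
  calc renyiTerm α β (∑ i ∈ s, f i)
      = (∑ i ∈ s, ∑ x, f i x) * (rpowNorm α (∑ i ∈ s, f i) / ∑ i ∈ s, ∑ x, f i x) ^ β := by
        rw [renyiTerm, sum_sum_apply_comm]
    _ ≤ (∑ i ∈ s, ∑ x, f i x) * ((∑ i ∈ s, rpowNorm α (f i)) / ∑ i ∈ s, ∑ x, f i x) ^ β := by
        have hm : 0 ≤ ∑ i ∈ s, ∑ x, f i x := sum_nonneg fun i hi => sum_nonneg fun x _ => hf i hi x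
        gcongr
        · exact div_nonneg (rpowNorm_nonneg (sum_apply_nonneg hf)) hm
        · exact rpowNorm_sum_le_sum_rpowNorm s hf hα
    _ ≤ ∑ i ∈ s, renyiTerm α β (f i) :=
        mul_sum_div_rpow_le s (fun i hi => sum_nonneg fun x _ => hf i hi x)
          (fun i hi => rpowNorm_nonneg (hf i hi))
          (rpowNorm_eq_zero_of_sum_eq_zero s hf hα0.ne') hβ

end Renyi

section RenyiSum

variable {𝓩 : Type*} [Fintype 𝓩] {α β : ℝ}

def renyiSum (P : 𝓧 × 𝓨 → ℝ) (α β : ℝ) : ℝ := ∑ y, renyiTerm α β (fun x => P (x, y))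

theorem Htilde_eq_logb_renyiSum {P : 𝓧 × 𝓨 → ℝ} (hP : ∀ p, 0 ≤ P p) (hα : α ≠ 0) :
    Htilde P α β = α / (β * (1 - α)) * Real.logb 2 (renyiSum P α β) := by
  rw [Htilde, renyiSum]
  congr 2
  refine sum_congr rfl fun y _ => ?_
  have hm : 0 ≤ ∑ x, P (x, y) := sum_nonneg fun x _ => hP _
  split_ifs with h
  · change (∑ x, P (x, y)) * (∑ x, (P (x, y) / ∑ x', P (x', y)) ^ α) ^ (β / α) = _
    rw [sum_div_rpow_eq (fun x => hP _) hα hm, ← Real.rpow_mul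
      (div_nonneg (rpowNorm_nonneg fun x => hP _) hm), mul_div_cancel₀ β hα, renyiTerm]
  · rw [renyiTerm, show ∑ x, P (x, y) = 0 from le_antisymm (not_lt.1 h) hm, zero_mul]

theorem renyiSum_pos {P : 𝓧 × 𝓨 → ℝ} (hP : ∀ p, 0 ≤ P p) (h : ∃ p, 0 < P p) :
    0 < renyiSum P α β := by
  obtain ⟨⟨x, y⟩, hxy⟩ := h
  exact sum_pos' (fun y _ => renyiTerm_nonneg fun x => hP _)
    ⟨y, mem_univ y, renyiTerm_pos (fun x => hP _) ⟨x, hxy⟩⟩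

theorem renyiSum_prod (Q : 𝓧 × (𝓨 × 𝓩) → ℝ) :
    renyiSum Q α β = ∑ y, ∑ z, renyiTerm α β (fun x => Q (x, y, z)) :=
  Fintype.sum_prod_type _

theorem renyiSum_marginal (P : 𝓧 × 𝓨 × 𝓩 → ℝ) :
    renyiSum (fun q : 𝓧 × 𝓨 => ∑ z, P (q.1, q.2, z)) α β =
      ∑ y, renyiTerm α β (∑ z, fun x => P (x, y, z)) := by
  simp only [renyiSum, Finset.sum_fn]

theorem renyiSum_le_renyiSum_marginal (P : 𝓧 × 𝓨 × 𝓩 → ℝ) (hP : ∀ p, 0 ≤ P p) (hα0 : 0 < α)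
    (hα1 : α ≤ 1) (hβ0 : 0 ≤ β) (hβ1 : β ≤ 1) :
    renyiSum (fun p : 𝓧 × (𝓨 × 𝓩) => P (p.1, p.2.1, p.2.2)) α β ≤
      renyiSum (fun q : 𝓧 × 𝓨 => ∑ z, P (q.1, q.2, z)) α β := by
  rw [renyiSum_prod, renyiSum_marginal]
  exact sum_le_sum fun y _ =>
    sum_renyiTerm_le_renyiTerm_sum univ (fun z _ x => hP _) hα0 hα1 hβ0 hβ1

theorem renyiSum_marginal_le_renyiSum (P : 𝓧 × 𝓨 × 𝓩 → ℝ) (hP : ∀ p, 0 ≤ P p) (hα : 1 ≤ α)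
    (hβ : 1 ≤ β) :
    renyiSum (fun q : 𝓧 × 𝓨 => ∑ z, P (q.1, q.2, z)) α β ≤
      renyiSum (fun p : 𝓧 × (𝓨 × 𝓩) => P (p.1, p.2.1, p.2.2)) α β := by
  rw [renyiSum_prod, renyiSum_marginal]
  exact sum_le_sum fun y _ => renyiTerm_sum_le_sum_renyiTerm univ (fun z _ x => hP _) hα hβ

end RenyiSum

section Conditional

variable {X Y : Type*} [Fintype X] {P : X × Y → ℝ}

theorem le_pY (hP : ∀ p, 0 ≤ P p) (x : X) (y : Y) : P (x, y) ≤ pY P y :=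
  single_le_sum (f := fun x => P (x, y)) (fun _ _ => hP _) (mem_univ x)

theorem pCond_nonneg (hP : ∀ p, 0 ≤ P p) (x : X) (y : Y) : 0 ≤ pCond P x y :=
  div_nonneg (hP _) ((hP _).trans (le_pY hP x y))

theorem pCond_pos (hP : ∀ p, 0 ≤ P p) {x : X} {y : Y} (h : 0 < P (x, y)) : 0 < pCond P x y :=
  div_pos h (h.trans_le (le_pY hP x y))

theorem pCond_mul_pY (hP : ∀ p, 0 ≤ P p) (x : X) (y : Y) : pCond P x y * pY P y = P (x, y) :=
  div_mul_cancel_of_imp fun h => le_antisymm (h ▸ le_pY hP x y) (hP _)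

end Conditional

section Shannon

variable {𝓩 : Type*} [Fintype 𝓩]

theorem shannonCond_eq {P : 𝓧 × 𝓨 → ℝ} (hP : ∀ p, 0 ≤ P p) :
    shannonCond P = -∑ p, P p * Real.logb 2 (pCond P p.1 p.2) := by
  rw [shannonCond]
  congr 1
  refine sum_congr rfl fun p _ => ?_
  split_ifs with h
  · rfl
  · rw [le_antisymm (not_lt.1 h) (hP p), zero_mul]

theorem mul_logb_sub_logb_div_le {a c d : ℝ} (ha : 0 ≤ a) (hc : 0 ≤ c) (hca : 0 < c → 0 < a)
    (hcd : c ≤ d) : c * (Real.logb 2 a - Real.logb 2 (c / d)) ≤ (a * d - c) / Real.log 2 := by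
  rcases hc.eq_or_lt with rfl | hc
  · rw [zero_mul, sub_zero]
    exact div_nonneg (mul_nonneg ha (hc.trans hcd)) (Real.log_nonneg one_le_two)
  have ha := hca hc
  have hd := hc.trans_le hcd
  have hlog : Real.logb 2 a - Real.logb 2 (c / d) = Real.log (a * d / c) / Real.log 2 := by
    rw [Real.logb, Real.logb, ← sub_div, ← Real.log_div ha.ne' (div_pos hc hd).ne',
      div_div_eq_mul_div]
  calc c * (Real.logb 2 a - Real.logb 2 (c / d))
      ≤ c * ((a * d / c - 1) / Real.log 2) := by
        rw [hlog]
        gcongr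
        exact Real.log_le_sub_one_of_pos (by positivity)
    _ = (a * d - c) / Real.log 2 := by field_simp

theorem shannonCond_le_shannonCond_marginal (P : 𝓧 × 𝓨 × 𝓩 → ℝ) (hP : ∀ p, 0 ≤ P p) :
    shannonCond (fun p : 𝓧 × (𝓨 × 𝓩) => P (p.1, p.2.1, p.2.2)) ≤
      shannonCond (fun q : 𝓧 × 𝓨 => ∑ z, P (q.1, q.2, z)) := by
  set Q := fun p : 𝓧 × (𝓨 × 𝓩) => P (p.1, p.2.1, p.2.2)
  set R := fun q : 𝓧 × 𝓨 => ∑ z, P (q.1, q.2, z)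
  have hQ : ∀ p, 0 ≤ Q p := fun p => hP _
  have hR : ∀ q, 0 ≤ R q := fun q => sum_nonneg fun z _ => hP _
  have hQ_split : ∑ p, Q p * Real.logb 2 (pCond Q p.1 p.2) =
      ∑ x, ∑ y, ∑ z, P (x, y, z) * Real.logb 2 (pCond Q x (y, z)) := by
    simp only [Fintype.sum_prod_type, Q]
  have hR_split : ∑ q, R q * Real.logb 2 (pCond R q.1 q.2) =
      ∑ x, ∑ y, ∑ z, P (x, y, z) * Real.logb 2 (pCond R x y) := by
    simp only [Fintype.sum_prod_type, R, sum_mul]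
  have hmass : ∑ x, ∑ y, ∑ z, pCond R x y * pY Q (y, z) = ∑ x, ∑ y, ∑ z, P (x, y, z) := by
    refine sum_congr rfl fun x _ => sum_congr rfl fun y _ => ?_
    rw [← mul_sum, show ∑ z, pY Q (y, z) = pY R y from sum_comm, pCond_mul_pY hR]
  rw [shannonCond_eq hQ, shannonCond_eq hR, neg_le_neg_iff, hQ_split, hR_split, ← sub_nonpos]
  calc ∑ x, ∑ y, ∑ z, P (x, y, z) * Real.logb 2 (pCond R x y) -
        ∑ x, ∑ y, ∑ z, P (x, y, z) * Real.logb 2 (pCond Q x (y, z))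
      = ∑ x, ∑ y, ∑ z, P (x, y, z) *
          (Real.logb 2 (pCond R x y) - Real.logb 2 (pCond Q x (y, z))) := by
        simp only [← sum_sub_distrib, mul_sub]
    _ ≤ ∑ x, ∑ y, ∑ z, (pCond R x y * pY Q (y, z) - P (x, y, z)) / Real.log 2 := by
        gcongr with x _ y _ z _
        exact mul_logb_sub_logb_div_le (pCond_nonneg hR x y) (hP _)
          (fun h => pCond_pos hR (h.trans_le
            (single_le_sum (f := fun z => P (x, y, z)) (fun z _ => hP _) (mem_univ z))))
          (le_pY hQ x (y, z))
    _ = 0 := by simp only [← sum_div, sum_sub_distrib, hmass, sub_self, zero_div]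

end Shannon

theorem HtildeE_extra_conditioning_general
    {𝓩 : Type*} [Fintype 𝓩]
    (P : 𝓧 × 𝓨 × 𝓩 → ℝ) (hP : ∀ p, 0 ≤ P p) (hPsum : ∑ p, P p = 1)
    (α β : ℝ)
    (h : (0 < α ∧ α ≤ 1 ∧ 0 < β ∧ β ≤ 1) ∨ (1 ≤ α ∧ 1 ≤ β)) :
    HtildeE (fun p : 𝓧 × (𝓨 × 𝓩) => P (p.1, p.2.1, p.2.2)) α β ≤
      HtildeE (fun q : 𝓧 × 𝓨 => ∑ z, P (q.1, q.2, z)) α β := by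
  rcases eq_or_ne α 1 with rfl | hα
  · simpa only [HtildeE, if_true] using shannonCond_le_shannonCond_marginal P hP
  have hα0 : 0 < α := by rcases h with h | h <;> linarith [h.1]
  have hQ : ∀ p : 𝓧 × (𝓨 × 𝓩), 0 ≤ P (p.1, p.2.1, p.2.2) := fun p => hP _
  have hR : ∀ q : 𝓧 × 𝓨, 0 ≤ ∑ z, P (q.1, q.2, z) := fun q => sum_nonneg fun z _ => hP _
  obtain ⟨⟨x, y, z⟩, -, hp⟩ := exists_lt_of_sum_lt (s := univ) (f := 0) (g := P) (by simp [hPsum])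
  have hQpos := renyiSum_pos hQ ⟨(x, y, z), hp⟩ (α := α) (β := β)
  have hRpos := renyiSum_pos hR ⟨(x, y), hp.trans_le
    (single_le_sum (f := fun z => P (x, y, z)) (fun z _ => hP _) (mem_univ z))⟩ (α := α) (β := β)
  simp only [HtildeE, if_neg hα]
  rw [Htilde_eq_logb_renyiSum hQ hα0.ne', Htilde_eq_logb_renyiSum hR hα0.ne']
  rcases h with ⟨-, hα1, hβ0, hβ1⟩ | ⟨hα1, hβ1⟩
  · exact mul_le_mul_of_nonneg_left (Real.logb_le_logb_of_le one_lt_two hQpos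
      (renyiSum_le_renyiSum_marginal P hP hα0 hα1 hβ0.le hβ1))
      (div_nonneg hα0.le (mul_nonneg hβ0.le (sub_nonneg.2 hα1)))
  · exact mul_le_mul_of_nonpos_left (Real.logb_le_logb_of_le one_lt_two hRpos
      (renyiSum_marginal_le_renyiSum P hP hα1 hβ1))
      (div_nonpos_of_nonneg_of_nonpos hα0.le
        (mul_nonpos_of_nonneg_of_nonpos (zero_le_one.trans hβ1) (sub_nonpos.2 hα1)))

/-- data processing inequality under extra conditioning:
`H̃_{α,β}(X|YZ) ≤ H̃_{α,β}(X|Y)` for `α, β ∈ (0,1]` or `α, β ∈ [1,∞)`. -/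
theorem HtildeE_extra_conditioning
    {𝓩 : Type*} [Fintype 𝓩] [Nonempty 𝓧] [Nonempty 𝓨] [Nonempty 𝓩]
    (P : 𝓧 × 𝓨 × 𝓩 → ℝ) (hP : ∀ p, 0 ≤ P p) (hPsum : ∑ p, P p = 1)
    (α β : ℝ)
    (h : (0 < α ∧ α ≤ 1 ∧ 0 < β ∧ β ≤ 1) ∨ (1 ≤ α ∧ 1 ≤ β)) :
    HtildeE (fun p : 𝓧 × (𝓨 × 𝓩) => P (p.1, p.2.1, p.2.2)) α β ≤
      HtildeE (fun q : 𝓧 × 𝓨 => ∑ z, P (q.1, q.2, z)) α β :=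
  HtildeE_extra_conditioning_general P hP hPsum α β h
end
end
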